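/- arXiv:1610.06728 — 5 statements merged into one kernel-verified Lean document; each statement's English description precedes it below -/
import Mathlib

section
/- (Ennola) Let F = 𝔽_{q²} be a finite field with q odd, with involution σ(a) = a^q. If f ∈ F[x] is a monic, irreducible, self-U-reciprocal polynomial, then the degree of f is odd. -/
open Polynomial

/-- The U-reciprocal polynomial `f̃(x) = σ(f(0))⁻¹ · x^d · σ(f)(1/x)`. -/
noncomputable def utilde {F : Type*} [Field F] (σ : F ≃+* F) (f : F[X]) : F[X] :=
  C (σ (f.coeff 0))⁻¹ * (f.map (σ : F →+* F)).reverse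

/-- Auxiliary: `Q^d - 1 ∣ Q^k - 1` implies `d ∣ k` (for `Q ≥ 2`, `d > 0`). -/
lemma aux_dvd_of_pow_sub_one_dvd {Q d k : ℕ} (hQ : 2 ≤ Q) (hd : 0 < d)
    (h : Q ^ d - 1 ∣ Q ^ k - 1) : d ∣ k := by
  have hmod : k % d < d := Nat.mod_lt _ hd
  have key : Q ^ d - 1 ∣ Q ^ (k % d) - 1 := by
    have h1 : Q ^ d - 1 ∣ Q ^ (d * (k / d)) - 1 := by
      have := Nat.sub_dvd_pow_sub_pow (Q ^ d) 1 (k / d)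
      simpa [one_pow, ← pow_mul] using this
    have e2 : 1 ≤ Q ^ (k % d) := Nat.one_le_pow _ _ (by omega)
    have e1 : 1 ≤ Q ^ (d * (k / d)) := Nat.one_le_pow _ _ (by omega)
    have e3 : Q ^ k = Q ^ (k % d) * Q ^ (d * (k / d)) := by
      rw [← pow_add, Nat.mod_add_div]
    have e4 : Q ^ (k % d) ≤ Q ^ (k % d) * Q ^ (d * (k / d)) :=
      Nat.le_mul_of_pos_right _ (by omega)
    have h2 : Q ^ k - 1 = Q ^ (k % d) * (Q ^ (d * (k / d)) - 1) + (Q ^ (k % d) - 1) := by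
      rw [Nat.mul_sub, mul_one, e3]
      omega
    rw [h2] at h
    exact (Nat.dvd_add_right (Dvd.dvd.mul_left h1 _)).mp h
  have hlt : Q ^ (k % d) - 1 < Q ^ d - 1 := by
    have h5 := Nat.pow_lt_pow_right (by omega : 1 < Q) hmod
    have : 1 ≤ Q ^ (k % d) := Nat.one_le_pow _ _ (by omega)
    omega
  have hz : Q ^ (k % d) - 1 = 0 := Nat.eq_zero_of_dvd_of_lt key hlt
  have h1 : 1 ≤ Q ^ (k % d) := Nat.one_le_pow _ _ (by omega)
  have hone : Q ^ (k % d) = 1 := by omega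
  have hkd : k % d = 0 := by
    by_contra hne
    have := Nat.le_self_pow hne Q
    omega
  exact Nat.dvd_of_mod_eq_zero hkd

/-- (Ennola) Over the finite field `𝔽_{q²}` (`q` odd) with the involution `a ↦ a^q`,
every monic irreducible self-U-reciprocal polynomial has odd degree. -/
theorem odd_degree_of_irreducible_self_utilde {F : Type*} [Field F] [Fintype F]
    (q : ℕ) (hq : Odd q) (hcard : Fintype.card F = q ^ 2)
    (σ : F ≃+* F) (hσ : ∀ a : F, σ a = a ^ q)
    (f : F[X]) (hf : f.Monic) (hirr : Irreducible f) (hself : f = utilde σ f) :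
    Odd f.natDegree := by
  classical
  set d := f.natDegree with hd_def
  have hd : 0 < d := hirr.natDegree_pos
  set Q : ℕ := q ^ 2 with hQ_def
  have hQ1 : 1 < Q := hcard ▸ Fintype.one_lt_card
  have hq2 : 2 ≤ q := by
    by_contra h
    have hq1 : q ≤ 1 := by omega
    have : Q ≤ 1 := by
      calc Q = q ^ 2 := rfl
        _ ≤ 1 ^ 2 := Nat.pow_le_pow_left hq1 2
        _ = 1 := one_pow 2
    omega
  -- f(0) ≠ 0
  have hf0 : f.coeff 0 ≠ 0 := by
    intro h0
    have : utilde σ f = 0 := by simp [utilde, h0]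
    exact hf.ne_zero (hself.trans this)
  haveI := Fact.mk hirr
  set p := ringChar F with hp_def
  haveI hp : Fact p.Prime := ⟨CharP.char_is_prime F p⟩
  -- q = p ^ s
  obtain ⟨m, hm⟩ : ∃ m : ℕ, Fintype.card F = p ^ m := by
    obtain ⟨n, _, hn⟩ := FiniteField.card F p
    exact ⟨n, hn⟩
  obtain ⟨s, _, hqs⟩ : ∃ s ≤ m, q = p ^ s := by
    refine (Nat.dvd_prime_pow hp.out).mp ?_
    refine Dvd.dvd.trans ⟨q, (sq q)⟩ ?_
    rw [← hQ_def, ← hcard, hm]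
  -- the field K = F[x]/(f)
  set K := AdjoinRoot f with hK_def
  set ι : F →+* K := algebraMap F K with hι_def
  set α : K := AdjoinRoot.root f with hα_def
  have hα : eval₂ ι α f = 0 := by
    rw [hι_def, AdjoinRoot.algebraMap_eq]
    exact AdjoinRoot.eval₂_root f
  have hα0 : α ≠ 0 := by
    intro h
    rw [h, eval₂_at_zero] at hα
    exact hf0 ((algebraMap F K).injective (by simpa using hα))
  -- frobenius machinery
  haveI : CharP K p := charP_of_injective_algebraMap (algebraMap F K).injective p
  haveI : ExpChar K p := ExpChar.prime hp.out
  set Φ : ℕ → K →+* K := fun n => iterateFrobenius K p n with hΦ_def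
  have hΦ : ∀ (n : ℕ) (x : K), Φ n x = x ^ p ^ n := fun n x => rfl
  -- elements of F are fixed by x ↦ x^Q
  have hιQ : ∀ a : F, ι a ^ Q = ι a := by
    intro a
    rw [← map_pow]
    congr 1
    rw [← hcard]
    exact FiniteField.pow_card a
  have hιQk : ∀ (k : ℕ) (a : F), ι a ^ Q ^ k = ι a := by
    intro k a
    induction k with
    | zero => simp
    | succ k ih => rw [pow_succ, pow_mul, ih, hιQ]
  -- key frobenius-evaluation identities
  have hF1 : ∀ x : K, (eval₂ ι x f) ^ q = eval₂ ι (x ^ q) (f.map (σ : F →+* F)) := by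
    intro x
    have h1 : Φ s (eval₂ ι x f) = eval₂ ((Φ s).comp ι) (Φ s x) f := hom_eval₂ f ι (Φ s) x
    have h2 : (Φ s).comp ι = ι.comp (σ : F →+* F) := by
      ext a
      show Φ s (ι a) = ι ((σ : F →+* F) a)
      have hcoe : ((σ : F →+* F) a) = σ a := rfl
      rw [hcoe, hΦ, ← hqs, hσ, map_pow]
    rw [hqs, ← hΦ s (eval₂ ι x f), h1, h2, ← eval₂_map, hΦ]
  have hF2 : ∀ x : K, (eval₂ ι x f) ^ Q = eval₂ ι (x ^ Q) f := by
    intro x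
    have h1 : Φ (s * 2) (eval₂ ι x f) = eval₂ ((Φ (s * 2)).comp ι) (Φ (s * 2) x) f :=
      hom_eval₂ f ι (Φ (s * 2)) x
    have hps : p ^ (s * 2) = Q := by rw [pow_mul, ← hqs, hQ_def]
    have h2 : (Φ (s * 2)).comp ι = ι := by
      ext a
      show Φ (s * 2) (ι a) = ι a
      rw [hΦ, hps, hιQ]
    rw [← hps, ← hΦ (s * 2) (eval₂ ι x f), h1, h2, hΦ]
  -- K is a finite field of cardinality Q^d
  set pb : PowerBasis F K := AdjoinRoot.powerBasis hf.ne_zero with hpb_def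
  letI : Fintype K := Module.fintypeOfFintype pb.basis
  have hcardK : Fintype.card K = Q ^ d := by
    rw [Module.card_eq_pow_finrank (K := F) (V := K), hcard, pb.finrank, AdjoinRoot.powerBasis_dim]
  have hpowcard : ∀ x : K, x ^ Q ^ d = x := by
    intro x
    rw [← hcardK]
    exact FiniteField.pow_card x
  -- the full divisibility lemma
  have hdvd : ∀ k : ℕ, α ^ Q ^ k = α → d ∣ k := by
    intro k hk
    -- build the F-algebra endomorphism x ↦ x^(Q^k)
    have hexp : ∀ y : K, Φ (s * (2 * k)) y = y ^ Q ^ k := by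
      intro y
      rw [hΦ]
      congr 1
      rw [pow_mul p s (2 * k), ← hqs, pow_mul q 2 k, ← hQ_def]
    have hcomm : ∀ a : F, Φ (s * (2 * k)) (ι a) = ι a := by
      intro a
      rw [hexp, hιQk]
    set ν : K →ₐ[F] K := { toRingHom := Φ (s * (2 * k)), commutes' := hcomm } with hν_def
    have hνroot : ν (AdjoinRoot.root f) = AdjoinRoot.root f := by
      show Φ (s * (2 * k)) α = α
      rw [hexp, hk]
    have hνid : ν = AlgHom.id F K := AdjoinRoot.algHom_ext hνroot
    have hall : ∀ x : K, x ^ Q ^ k = x := by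
      intro x
      have := congrArg (fun g : K →ₐ[F] K => g x) hνid
      simpa [hν_def, hexp] using this
    -- transfer to units and exponents
    have hQk1 : 1 ≤ Q ^ k := Nat.one_le_pow _ _ (by omega)
    have hex : Monoid.exponent Kˣ ∣ Q ^ k - 1 := by
      refine Monoid.exponent_dvd_of_forall_pow_eq_one fun g => ?_
      have hgK : (g : K) ^ Q ^ k = (g : K) := hall g
      have h1 : g ^ Q ^ k = g := Units.ext (by rw [Units.val_pow_eq_pow_val]; exact hgK)
      have h2 : g ^ (Q ^ k - 1) * g = g ^ Q ^ k := by
        rw [← pow_succ]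
        congr 1
        omega
      rw [h1] at h2
      have := mul_right_cancel (h2.trans (one_mul g).symm)
      exact this
    have hcyc : Monoid.exponent Kˣ = Q ^ d - 1 := by
      rw [IsCyclic.exponent_eq_card, Nat.card_eq_fintype_card, Fintype.card_units, hcardK]
    rw [hcyc] at hex
    exact aux_dvd_of_pow_sub_one_dvd (by omega) hd hex
  -- the d conjugates of α are roots
  have hrootpow : ∀ i : ℕ, eval₂ ι (α ^ Q ^ i) f = 0 := by
    intro i
    induction i with
    | zero => simpa using hα
    | succ i ih =>
      rw [pow_succ Q i, pow_mul α (Q ^ i) Q, ← hF2, ih, zero_pow (by omega : Q ≠ 0)]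
  -- they are distinct
  have hinj : ∀ i j : ℕ, i ≤ j → j < d → α ^ Q ^ i = α ^ Q ^ j → i = j := by
    intro i j hij hjd heq
    have h1 : α ^ Q ^ (i + (d - j)) = α := by
      have h2 : (α ^ Q ^ i) ^ Q ^ (d - j) = (α ^ Q ^ j) ^ Q ^ (d - j) := by rw [heq]
      rw [← pow_mul α (Q ^ i) (Q ^ (d - j)), ← pow_mul α (Q ^ j) (Q ^ (d - j)),
        ← pow_add Q i (d - j), ← pow_add Q j (d - j)] at h2
      have h3 : j + (d - j) = d := by omega
      rw [h3, hpowcard] at h2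
      exact h2
    have h4 := hdvd _ h1
    have h5 : 0 < i + (d - j) := by omega
    have h6 : i + (d - j) ≤ d := by omega
    have := Nat.le_of_dvd h5 h4
    omega
  -- the root set
  set fK : K[X] := f.map ι with hfK_def
  have hfK0 : fK ≠ 0 := (hf.map ι).ne_zero
  have hdegK : fK.natDegree = d := hf.natDegree_map ι
  set T : Finset K := (Finset.range d).image (fun i => α ^ Q ^ i) with hT_def
  have hTcard : T.card = d := by
    rw [hT_def, Finset.card_image_of_injOn, Finset.card_range]
    intro i hi j hj hij
    rcases le_total i j with h | h
    · exact hinj i j h (Finset.mem_range.mp hj) hij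
    · exact (hinj j i h (Finset.mem_range.mp hi) hij.symm).symm
  have hTsub : T ⊆ fK.roots.toFinset := by
    intro x hx
    obtain ⟨i, _, rfl⟩ := Finset.mem_image.mp hx
    rw [Multiset.mem_toFinset, mem_roots hfK0]
    show fK.IsRoot _
    rw [IsRoot.def, hfK_def, eval_map]
    exact hrootpow i
  have hRcard : fK.roots.toFinset.card ≤ d := by
    calc fK.roots.toFinset.card ≤ Multiset.card fK.roots := Multiset.toFinset_card_le _
      _ ≤ fK.natDegree := fK.card_roots'
      _ = d := hdegK
  have hTeq : T = fK.roots.toFinset :=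
    Finset.eq_of_subset_of_card_le hTsub (by omega)
  -- α^{-q} is a root
  have hαq0 : α ^ q ≠ 0 := pow_ne_zero _ hα0
  letI : Invertible (α ^ q) := invertibleOfNonzero hαq0
  have hβroot : eval₂ ι (⅟(α ^ q)) f = 0 := by
    have h0 : eval₂ ι (⅟(α ^ q)) (utilde σ f) = 0 := by
      rw [utilde, eval₂_mul, eval₂_C]
      have h1 : eval₂ ι (⅟(α ^ q)) ((f.map (σ : F →+* F)).reverse) = 0 := by
        rw [eval₂_reverse_eq_zero_iff]
        rw [← hF1, hα, zero_pow (by omega : q ≠ 0)]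
      rw [h1, mul_zero]
    rw [← hself] at h0
    exact h0
  have hβmem : ⅟(α ^ q) ∈ T := by
    rw [hTeq, Multiset.mem_toFinset, mem_roots hfK0]
    show fK.IsRoot _
    rw [IsRoot.def, hfK_def, eval_map]
    exact hβroot
  obtain ⟨j, hj, hje⟩ := Finset.mem_image.mp hβmem
  have hjd : j < d := Finset.mem_range.mp hj
  -- so α^(Q^j + q) = 1
  have hone : α ^ (Q ^ j + q) = 1 := by
    rw [pow_add, hje, invOf_mul_self]
  -- order considerations
  set a : Kˣ := Units.mk0 α hα0 with ha_def
  have haval : (a : K) = α := rfl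
  have hunit_pow : ∀ N : ℕ, α ^ N = 1 → a ^ N = 1 := by
    intro N hN
    exact Units.ext (by rw [Units.val_pow_eq_pow_val, haval, hN, Units.val_one])
  have hnd : orderOf a ∣ Q ^ j + q := orderOf_dvd_iff_pow_eq_one.mpr (hunit_pow _ hone)
  have hcop : Nat.Coprime (orderOf a) q := by
    have h1 : orderOf a ∣ Q ^ d - 1 := by
      have h2 := orderOf_dvd_card (x := a)
      rwa [Fintype.card_units, hcardK] at h2
    refine Nat.Coprime.coprime_dvd_left h1 ?_
    have hg1 : Nat.gcd (Q ^ d - 1) q ∣ Q ^ d := by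
      refine (Nat.gcd_dvd_right _ _).trans ?_
      refine Dvd.dvd.trans ⟨q, (sq q)⟩ ?_
      exact dvd_pow_self Q (by omega)
    have hg2 : Nat.gcd (Q ^ d - 1) q ∣ Q ^ d - 1 := Nat.gcd_dvd_left _ _
    have hg3 := Nat.dvd_sub hg1 hg2
    have hQd1 : 1 ≤ Q ^ d := Nat.one_le_pow _ _ (by omega)
    rw [Nat.sub_sub_self hQd1] at hg3
    exact Nat.dvd_one.mp hg3
  rcases Nat.eq_zero_or_pos j with rfl | hjpos
  · -- j = 0 : degree 1
    have hα1 : α ^ (q + 1) = 1 := by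
      rw [add_comm]
      simpa using hone
    have hQα : α ^ Q ^ 1 = α := by
      obtain ⟨t, rfl⟩ : ∃ t, q = t + 2 := ⟨q - 2, by omega⟩
      have h1 : Q ^ 1 = (t + 2 + 1) * (t + 1) + 1 := by
        rw [pow_one, hQ_def]
        ring
      rw [h1, pow_add α ((t + 2 + 1) * (t + 1)) 1, pow_mul α (t + 2 + 1) (t + 1), hα1,
        one_pow, one_mul, pow_one]
    have hD : d ∣ 1 := hdvd 1 hQα
    have : d = 1 := Nat.dvd_one.mp hD
    rw [this]
    exact ⟨0, rfl⟩
  · -- j ≥ 1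
    set n : ℕ := 2 * j - 1 with hn_def
    have hQjq : Q ^ j + q = q * (q ^ n + 1) := by
      have h1 : Q ^ j = q ^ (2 * j) := by rw [hQ_def, ← pow_mul]
      rw [h1, mul_add, mul_one]
      congr 1
      rw [← pow_succ' q n]
      congr 1
      omega
    have hdm : orderOf a ∣ q ^ n + 1 := by
      rw [hQjq] at hnd
      exact (Nat.Coprime.dvd_of_dvd_mul_left hcop hnd)
    have hαm : α ^ (q ^ n + 1) = 1 := by
      have := orderOf_dvd_iff_pow_eq_one.mp hdm
      have h2 := congrArg (Units.val) this
      rwa [Units.val_pow_eq_pow_val, haval, Units.val_one] at h2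
    have key : α ^ Q ^ n = α := by
      have h1 : α ^ q ^ n * α = 1 := by
        rw [← pow_succ α (q ^ n)]
        exact hαm
      have h2 : (α ^ q ^ n * α) ^ q ^ n = 1 := by rw [h1, one_pow]
      rw [mul_pow, ← pow_mul α (q ^ n) (q ^ n)] at h2
      have h3 : q ^ n * q ^ n = Q ^ n := by
        rw [← pow_add q n n, hQ_def, ← pow_mul q 2 n]
        congr 1
        omega
      rw [h3] at h2
      have h4 : α ^ Q ^ n * α ^ q ^ n = α ^ q ^ n * α := h2.trans h1.symm
      rw [mul_comm (α ^ q ^ n) α] at h4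
      exact mul_right_cancel₀ (pow_ne_zero _ hα0) h4
    have hdvdn : d ∣ n := hdvd n key
    obtain ⟨t, ht⟩ := hdvdn
    have hn1 : 1 ≤ n := by omega
    have hn2 : n < 2 * d := by omega
    have ht0 : t ≠ 0 := by
      rintro rfl
      rw [Nat.mul_zero] at ht
      omega
    have ht2 : t < 2 := by
      by_contra hcon
      push_neg at hcon
      have h6 : d * 2 ≤ d * t := Nat.mul_le_mul_left d hcon
      omega
    have ht1 : t = 1 := by omega
    have hdn : d = n := by rw [ht, ht1, Nat.mul_one]
    rw [hdn]
    exact ⟨j - 1, by omega⟩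
end

section
/- Let V be a finite-dimensional vector space over a field F with involution σ, equipped with a nondegenerate hermitian form B, and let T be in the unitary group U(V,B). Then the minimal polynomial of T is self-U-reciprocal. -/
open Polynomial

/-- The minimal polynomial of an element of the unitary group `U(V,B)` of a
nondegenerate hermitian form `B` is self-U-reciprocal. -/
theorem minpoly_self_utilde_of_unitary {F V : Type*} [Field F]
    [AddCommGroup V] [Module F V] [FiniteDimensional F V]
    (σ : F ≃+* F) (hσ : ∀ a, σ (σ a) = a)
    (B : V → V → F)
    (hadd : ∀ u u' v, B (u + u') v = B u v + B u' v)
    (hsmul : ∀ (a : F) u v, B (a • u) v = a * B u v)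
    (hherm : ∀ u v, B u v = σ (B v u))
    (hnondeg : ∀ v, (∀ u, B u v = 0) → v = 0)
    (T : V →ₗ[F] V) (hT : ∀ u v, B (T u) (T v) = B u v) :
    minpoly F T = utilde σ (minpoly F T) := by
  have hint : IsIntegral F T := T.isIntegral
  set m : F[X] := minpoly F T with hm_def
  have hmon : m.Monic := minpoly.monic hint
  have hmne : m ≠ 0 := hmon.ne_zero
  have haev : Polynomial.aeval T m = 0 := minpoly.aeval F T
  -- basic bilinearity facts
  have hB0l : ∀ u, B 0 u = 0 := by
    intro u
    have h := hsmul 0 0 u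
    simpa using h
  have hB0r : ∀ u, B u 0 = 0 := by
    intro u; rw [hherm, hB0l, map_zero]
  have haddr : ∀ u v v', B u (v + v') = B u v + B u v' := by
    intro u v v'; rw [hherm, hadd, map_add, ← hherm, ← hherm]
  have hsmulr : ∀ (a : F) u v, B u (a • v) = σ a * B u v := by
    intro a u v; rw [hherm, hsmul, map_mul, ← hherm]
  have hBsumr : ∀ (s : Finset ℕ) (g : ℕ → V) (u : V),
      B u (∑ j ∈ s, g j) = ∑ j ∈ s, B u (g j) := by
    intro s g u
    induction s using Finset.induction with
    | empty => simpa using hB0r u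
    | insert _ _ hx ih => rw [Finset.sum_insert hx, Finset.sum_insert hx, haddr, ih]
  have hBsuml : ∀ (s : Finset ℕ) (g : ℕ → V) (v : V),
      B (∑ j ∈ s, g j) v = ∑ j ∈ s, B (g j) v := by
    intro s g v
    induction s using Finset.induction with
    | empty => simpa using hB0l v
    | insert _ _ hx ih => rw [Finset.sum_insert hx, Finset.sum_insert hx, hadd, ih]
  -- powers of T preserve B
  have hTk : ∀ (k : ℕ) (u v : V), B ((T ^ k) u) ((T ^ k) v) = B u v := by
    intro k
    induction k with
    | zero => intro u v; simp
    | succ n ih =>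
      intro u v
      rw [pow_succ, Module.End.mul_apply, Module.End.mul_apply, ih, hT]
  -- T is bijective
  have hTinj : Function.Injective T := by
    rw [← LinearMap.ker_eq_bot, LinearMap.ker_eq_bot']
    intro v hv
    apply hnondeg
    intro u
    rw [← hT u v, hv, hB0r]
  -- m has nonzero constant coefficient
  have hm0 : m.coeff 0 ≠ 0 := by
    intro h0
    obtain ⟨q, hq⟩ := (X_dvd_iff).mpr h0
    have haev' := haev
    rw [hq, map_mul, aeval_X] at haev'
    have hq0 : Polynomial.aeval T q = 0 := by
      ext v
      have h := congrFun (congrArg DFunLike.coe haev') v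
      simp only [Module.End.mul_apply, LinearMap.zero_apply] at h
      exact hTinj (by simpa using h)
    have hqne : q ≠ 0 := by rintro rfl; rw [mul_zero] at hq; exact hmne hq
    have h1 : m.natDegree ≤ q.natDegree :=
      natDegree_le_of_dvd (minpoly.dvd F T hq0) hqne
    have h2 : m.natDegree = q.natDegree + 1 := by
      rw [hq, natDegree_X_mul hqne]
    omega
  set d : ℕ := m.natDegree with hd_def
  set f : F[X] := m.map (σ : F →+* F) with hf_def
  have hfdeg : f.natDegree = d := natDegree_map_eq_of_injective σ.injective m
  have hf0 : f.coeff 0 = σ (m.coeff 0) := by rw [hf_def, coeff_map]; rfl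
  have hf0ne : f.coeff 0 ≠ 0 := by
    rw [hf0]
    intro h
    exact hm0 (by simpa [hσ] using congrArg σ h)
  have hfne : f ≠ 0 := fun h => hf0ne (by simp [h])
  have htrail : f.natTrailingDegree = 0 :=
    natTrailingDegree_eq_zero.mpr (Or.inr hf0ne)
  -- the key: aeval T f.reverse = 0
  have hrev : Polynomial.aeval T f.reverse = 0 := by
    ext v
    simp only [LinearMap.zero_apply]
    apply hnondeg
    intro u
    obtain ⟨w, rfl⟩ : ∃ w, (T ^ d) w = u := by
      have hinj : Function.Injective (T ^ d) := by
        induction d with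
        | zero => intro a b h; simpa using h
        | succ n ih =>
          intro a b h
          rw [pow_succ, Module.End.mul_apply, Module.End.mul_apply] at h
          exact hTinj (ih h)
      exact (LinearMap.injective_iff_surjective.mp hinj) u
    have hsum : (Polynomial.aeval T f.reverse) v =
        ∑ j ∈ Finset.range (d + 1), f.coeff (d - j) • (T ^ j) v := by
      rw [Polynomial.aeval_endomorphism]
      rw [Polynomial.sum_over_range' f.reverse (f := fun n b => b • (T ^ n) v)
          (fun n => zero_smul F _) (d + 1)
          (Nat.lt_succ_of_le (hfdeg ▸ f.reverse_natDegree_le))]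
      refine Finset.sum_congr rfl fun j hj => ?_
      have hjd : j ≤ d := Nat.lt_succ_iff.mp (Finset.mem_range.mp hj)
      rw [coeff_reverse, hfdeg, revAt_le hjd]
    rw [hsum, hBsumr]
    have hterm : ∀ j ∈ Finset.range (d + 1),
        B ((T ^ d) w) (f.coeff (d - j) • (T ^ j) v)
          = m.coeff (d - j) * B ((T ^ (d - j)) w) v := by
      intro j hj
      have hjd : j ≤ d := Nat.lt_succ_iff.mp (Finset.mem_range.mp hj)
      rw [hsmulr, hf_def, coeff_map]
      have hpow : (T ^ d) w = (T ^ j) ((T ^ (d - j)) w) := by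
        rw [← Module.End.mul_apply, ← pow_add]
        congr 2
        omega
      rw [hpow, hTk]
      congr 1
      exact hσ _
    rw [Finset.sum_congr rfl hterm]
    have hre : ∑ j ∈ Finset.range (d + 1), m.coeff (d - j) * B ((T ^ (d - j)) w) v
        = ∑ i ∈ Finset.range (d + 1), m.coeff i * B ((T ^ i) w) v :=
      Finset.sum_range_reflect (fun i => m.coeff i * B ((T ^ i) w) v) (d + 1)
    rw [hre]
    have hback : ∑ i ∈ Finset.range (d + 1), m.coeff i * B ((T ^ i) w) v
        = B ((Polynomial.aeval T m) w) v := by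
      rw [Polynomial.aeval_endomorphism]
      rw [Polynomial.sum_over_range' m (f := fun n b => b • (T ^ n) w)
          (fun n => zero_smul F _) (d + 1) (Nat.lt_succ_self d), hBsuml]
      exact Finset.sum_congr rfl fun i _ => (hsmul _ _ _).symm
    rw [hback, haev]
    simpa using hB0l v
  -- utilde annihilates T
  have hut0 : Polynomial.aeval T (utilde σ m) = 0 := by
    rw [utilde, map_mul, hrev, mul_zero]
  -- utilde is monic of degree d
  have hcne : (σ (m.coeff 0))⁻¹ ≠ 0 := by
    simp only [ne_eq, inv_eq_zero]
    intro h
    exact hm0 (by simpa [hσ] using congrArg σ h)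
  have hutmon : (utilde σ m).Monic := by
    have h1 : f.reverse.leadingCoeff = σ (m.coeff 0) := by
      rw [reverse_leadingCoeff, trailingCoeff, htrail, hf0]
    unfold Monic utilde
    rw [leadingCoeff_mul, leadingCoeff_C, ← hf_def, h1, inv_mul_cancel₀]
    intro h
    exact hm0 (by simpa [hσ] using congrArg σ h)
  have hutdeg : (utilde σ m).natDegree = d := by
    rw [utilde, natDegree_C_mul hcne, ← hf_def, reverse_natDegree, htrail, hfdeg, Nat.sub_zero]
  have hutdeg' : (utilde σ m).degree = m.degree := by
    rw [degree_eq_natDegree hutmon.ne_zero, degree_eq_natDegree hmne, hutdeg]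
  exact (minpoly.unique F T hutmon hut0 fun q hq hq0 =>
    hutdeg' ▸ minpoly.min F T hq hq0).symm
end

section
/- Let T ∈ U(V,B) with minimal polynomial f(x) = ∏_i f_i(x)^{s_i}, where the f_i are distinct and each f_i^{s_i} is self-U-reciprocal. Then V = ⊕_i ker(f_i(T)^{s_i}) is a direct sum decomposition into T-invariant subspaces that are pairwise orthogonal and nondegenerate with respect to B. -/
open Polynomial

set_option maxHeartbeats 1000000

private lemma pow_mul_pow_cancel_aux {A : Type*} [Monoid A] {t s : A} (hts : t * s = 1) :
    ∀ k : ℕ, t ^ k * s ^ k = 1 := by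
  intro k
  induction k with
  | zero => simp
  | succ k ih =>
      rw [pow_succ, pow_succ', mul_assoc, ← mul_assoc t s, hts, one_mul, ih]

private lemma aeval_reflect_aux {F A : Type*} [Field F] [Ring A] [Algebra F A]
    {t s : A} (hts : t * s = 1) (N : ℕ) (q : F[X]) (hq : q.natDegree ≤ N) :
    aeval t (reflect N q) = t ^ N * aeval s q := by
  refine induction_with_natDegree_le
    (fun q => aeval t (reflect N q) = t ^ N * aeval s q) N ?_ ?_ ?_ q hq
  · simp
  · intro n r _ hnN
    rw [reflect_C_mul_X_pow, revAt_le hnN, map_mul, map_mul, aeval_C, aeval_C,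
      aeval_X_pow, aeval_X_pow]
    have key : t ^ N * s ^ n = t ^ (N - n) := by
      conv_lhs => rw [← Nat.sub_add_cancel hnN, pow_add, mul_assoc,
        pow_mul_pow_cancel_aux hts n, mul_one]
    calc algebraMap F A r * t ^ (N - n)
        = algebraMap F A r * (t ^ N * s ^ n) := by rw [key]
      _ = t ^ N * (algebraMap F A r * s ^ n) := by
          rw [← mul_assoc, Algebra.commutes, mul_assoc]
  · intro f g _ _ hf hg
    rw [reflect_add, map_add, map_add, hf, hg, mul_add]

/-- If `T ∈ U(V,B)` has minimal polynomial `∏ i, f i ^ s i` with pairwise coprime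
self-U-reciprocal factors `f i ^ s i`, then `V = ⊕ ker (f i (T) ^ s i)` is a direct sum
of `T`-invariant, pairwise `B`-orthogonal, `B`-nondegenerate subspaces. -/
theorem primary_decomposition_unitary {F V : Type*} [Field F]
    [AddCommGroup V] [Module F V] [FiniteDimensional F V]
    (σ : F ≃+* F) (hσ : ∀ a, σ (σ a) = a)
    (B : V → V → F)
    (hadd : ∀ u u' v, B (u + u') v = B u v + B u' v)
    (hsmul : ∀ (a : F) u v, B (a • u) v = a * B u v)
    (hherm : ∀ u v, B u v = σ (B v u))
    (hnondeg : ∀ v, (∀ u, B u v = 0) → v = 0)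
    (T : V →ₗ[F] V) (hT : ∀ u v, B (T u) (T v) = B u v)
    {ι : Type*} [Fintype ι] [DecidableEq ι] (f : ι → F[X]) (s : ι → ℕ)
    (hcop : Pairwise fun i j => IsCoprime (f i ^ s i) (f j ^ s j))
    (hmin : minpoly F T = ∏ i, f i ^ s i)
    (hself : ∀ i, f i ^ s i = utilde σ (f i ^ s i)) :
    DirectSum.IsInternal (fun i => LinearMap.ker (aeval T (f i ^ s i))) ∧
      (∀ i, ∀ v ∈ LinearMap.ker (aeval T (f i ^ s i)),
        T v ∈ LinearMap.ker (aeval T (f i ^ s i))) ∧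
      (∀ i j, i ≠ j → ∀ u ∈ LinearMap.ker (aeval T (f i ^ s i)),
        ∀ v ∈ LinearMap.ker (aeval T (f j ^ s j)), B u v = 0) ∧
      (∀ i, ∀ v ∈ LinearMap.ker (aeval T (f i ^ s i)),
        (∀ u ∈ LinearMap.ker (aeval T (f i ^ s i)), B u v = 0) → v = 0) := by
  classical
  -- basic sesquilinearity facts
  have hB0 : ∀ v, B 0 v = 0 := by
    intro v
    have h := hadd 0 0 v
    rw [add_zero] at h
    exact (left_eq_add.mp h)
  have hB0' : ∀ u, B u 0 = 0 := by
    intro u; rw [hherm, hB0, map_zero]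
  have hadd' : ∀ u v v', B u (v + v') = B u v + B u v' := by
    intro u v v'; rw [hherm, hadd, map_add, ← hherm, ← hherm]
  have hsmul' : ∀ (a : F) u v, B u (a • v) = σ a * B u v := by
    intro a u v; rw [hherm, hsmul, map_mul, ← hherm]
  -- T is bijective
  have hker0 : ∀ v, T v = 0 → v = 0 := by
    intro v hv
    refine hnondeg v fun u => ?_
    have h := hT u v
    rw [hv, hB0'] at h
    exact h.symm
  have hTinj : Function.Injective T := by
    intro x y hxy
    have := hker0 (x - y) (by rw [map_sub, hxy, sub_self])
    exact sub_eq_zero.mp this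
  have hTsurj : Function.Surjective T := (LinearMap.injective_iff_surjective).mp hTinj
  let e : V ≃ₗ[F] V := LinearEquiv.ofBijective T ⟨hTinj, hTsurj⟩
  let S : V →ₗ[F] V := e.symm.toLinearMap
  have hTS' : ∀ v, T (S v) = v := fun v => e.apply_symm_apply v
  have hST' : ∀ v, S (T v) = v := fun v => e.symm_apply_apply v
  have hTS : T * S = 1 := LinearMap.ext fun v => hTS' v
  have hST : S * T = 1 := LinearMap.ext fun v => hST' v
  -- adjoint lemma
  have hadj : ∀ (p : F[X]) (u v : V),
      B (aeval T p u) v = B u (aeval S (p.map (σ : F →+* F)) v) := by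
    intro p
    induction p using Polynomial.induction_on with
    | C a =>
        intro u v
        simp only [aeval_C, Polynomial.map_C, Module.algebraMap_end_apply, hsmul, hsmul',
          RingHom.coe_coe, hσ]
    | add p q hp hq =>
        intro u v
        simp only [Polynomial.map_add, map_add, LinearMap.add_apply, hadd, hadd', hp, hq]
    | monomial n a ih =>
        intro u v
        have hcm : aeval T (C a * X ^ n) * T = T * aeval T (C a * X ^ n) := by
          have h1 : aeval T ((C a * X ^ n) * X) = aeval T (C a * X ^ n) * T := by
            rw [map_mul, aeval_X]
          have h2 : aeval T (X * (C a * X ^ n)) = T * aeval T (C a * X ^ n) := by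
            rw [map_mul, aeval_X]
          rw [← h1, ← h2, mul_comm]
        have hc : ∀ w, aeval T (C a * X ^ n) (T w) = T (aeval T (C a * X ^ n) w) := by
          intro w
          rw [← Module.End.mul_apply, hcm, Module.End.mul_apply]
        rw [pow_succ]
        simp only [← mul_assoc]
        rw [Polynomial.map_mul, Polynomial.map_X]
        rw [map_mul (aeval T), map_mul (aeval S), aeval_X, aeval_X]
        rw [Module.End.mul_apply, Module.End.mul_apply]
        rw [hc u, ← ih u (S v)]
        rw [← hT (aeval T (C a * X ^ n) u) (S v), hTS' v]
  -- key lemma: self-U-reciprocal annihilators transfer to the inverse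
  have hkey : ∀ p : F[X], p ≠ 0 → p = utilde σ p → ∀ v, aeval T p v = 0 →
      aeval S (p.map (σ : F →+* F)) v = 0 := by
    intro p hp hpself v hv
    have hp0 : p.coeff 0 ≠ 0 := by
      intro h
      apply hp
      rw [hpself, utilde, h, map_zero, inv_zero, map_zero, zero_mul]
    have hσp0 : σ (p.coeff 0) ≠ 0 := by
      intro h
      exact hp0 (by simpa using σ.injective (h.trans (map_zero σ).symm))
    have h1 : C (σ (p.coeff 0)) * p = (p.map (σ : F →+* F)).reverse := by
      have h1 := congrArg (fun r => C (σ (p.coeff 0)) * r) hpself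
      simp only [utilde] at h1
      rw [← mul_assoc, ← C_mul, mul_inv_cancel₀ hσp0, C_1, one_mul] at h1
      exact h1
    set q : F[X] := p.map (σ : F →+* F) with hq
    have h2 : aeval T (reflect q.natDegree q) = T ^ q.natDegree * aeval S q :=
      aeval_reflect_aux hTS q.natDegree q le_rfl
    have h3 : aeval T q.reverse v = 0 := by
      rw [← h1, map_mul, aeval_C, Module.End.mul_apply, hv, map_zero]
    have h4 : (T ^ q.natDegree) (aeval S q v) = 0 := by
      rw [← Module.End.mul_apply, ← h2]
      exact h3
    have h5 : (S ^ q.natDegree * T ^ q.natDegree) (aeval S q v) = 0 := by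
      rw [Module.End.mul_apply, h4, map_zero]
    rwa [pow_mul_pow_cancel_aux hST q.natDegree, Module.End.one_apply] at h5
  -- minimal polynomial facts
  have hmne : minpoly F T ≠ 0 := minpoly.ne_zero (LinearMap.isIntegral T)
  have hgne : ∀ i, f i ^ s i ≠ 0 := by
    intro i hi
    exact hmne (by rw [hmin]; exact Finset.prod_eq_zero (Finset.mem_univ i) hi)
  have hannih : aeval T (∏ i, f i ^ s i) = 0 := by
    rw [← hmin]; exact minpoly.aeval F T
  -- sup of kernels over a finset
  have hsup : ∀ t : Finset ι, ∀ v : V, aeval T (∏ i ∈ t, f i ^ s i) v = 0 →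
      v ∈ ⨆ i ∈ t, LinearMap.ker (aeval T (f i ^ s i)) := by
    intro t
    induction t using Finset.induction_on with
    | empty =>
        intro v hv
        simp only [Finset.prod_empty, map_one, Module.End.one_apply] at hv
        rw [hv]
        exact zero_mem _
    | insert a t' hat ih =>
        intro v hv
        rw [Finset.prod_insert hat] at hv
        obtain ⟨x, y, hxy⟩ : IsCoprime (f a ^ s a) (∏ i ∈ t', f i ^ s i) :=
          IsCoprime.prod_right fun i hi => hcop (fun h => hat (h ▸ hi))
        have hv1 : v = aeval T (x * (f a ^ s a)) v + aeval T (y * ∏ i ∈ t', f i ^ s i) v := by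
          have h0 := congrArg (fun p => aeval T p v) hxy
          simp only [map_add, map_one, LinearMap.add_apply, Module.End.one_apply] at h0
          exact h0.symm
        have m1 : aeval T (x * (f a ^ s a)) v
            ∈ ⨆ i ∈ insert a t', LinearMap.ker (aeval T (f i ^ s i)) := by
          have hz : aeval T (∏ i ∈ t', f i ^ s i) (aeval T (x * (f a ^ s a)) v) = 0 := by
            rw [← Module.End.mul_apply, ← map_mul]
            have hrw : (∏ i ∈ t', f i ^ s i) * (x * (f a ^ s a))
                = x * ((f a ^ s a) * ∏ i ∈ t', f i ^ s i) := by ring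
            rw [hrw, map_mul, Module.End.mul_apply, hv, map_zero]
          have hm := ih _ hz
          have hle : (⨆ i ∈ t', LinearMap.ker (aeval T (f i ^ s i)))
              ≤ ⨆ i ∈ insert a t', LinearMap.ker (aeval T (f i ^ s i)) :=
            biSup_mono fun i hi => Finset.mem_insert_of_mem hi
          exact hle hm
        have m2 : aeval T (y * ∏ i ∈ t', f i ^ s i) v
            ∈ ⨆ i ∈ insert a t', LinearMap.ker (aeval T (f i ^ s i)) := by
          have hz : aeval T (f a ^ s a) (aeval T (y * ∏ i ∈ t', f i ^ s i) v) = 0 := by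
            rw [← Module.End.mul_apply, ← map_mul]
            have hrw : (f a ^ s a) * (y * ∏ i ∈ t', f i ^ s i)
                = y * ((f a ^ s a) * ∏ i ∈ t', f i ^ s i) := by ring
            rw [hrw, map_mul, Module.End.mul_apply, hv, map_zero]
          exact le_iSup₂ (f := fun i (_ : i ∈ insert a t') =>
            LinearMap.ker (aeval T (f i ^ s i))) a (Finset.mem_insert_self a t') hz
        rw [hv1]
        exact add_mem m1 m2
  have hsupr : (⨆ i, LinearMap.ker (aeval T (f i ^ s i))) = ⊤ := by
    rw [eq_top_iff]
    intro v _
    have h := hsup Finset.univ v (by rw [hannih]; rfl)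
    simpa using h
  -- independence
  have hind : iSupIndep (fun i => LinearMap.ker (aeval T (f i ^ s i))) := by
    intro i
    rw [disjoint_iff]
    rw [eq_bot_iff]
    intro v hv
    obtain ⟨hv1, hv2⟩ := Submodule.mem_inf.mp hv
    have hle : (⨆ j, ⨆ _ : j ≠ i, LinearMap.ker (aeval T (f j ^ s j)))
        ≤ LinearMap.ker (aeval T (∏ j ∈ Finset.univ.erase i, f j ^ s j)) := by
      refine iSup_le fun j => iSup_le fun hj => ?_
      intro w hw
      simp only [LinearMap.mem_ker] at hw ⊢
      obtain ⟨r, hr⟩ := Finset.dvd_prod_of_mem (fun j => f j ^ s j)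
        (Finset.mem_erase.mpr ⟨hj, Finset.mem_univ j⟩)
      rw [hr, mul_comm, map_mul, Module.End.mul_apply, hw, map_zero]
    have hv2' : aeval T (∏ j ∈ Finset.univ.erase i, f j ^ s j) v = 0 := hle hv2
    obtain ⟨x, y, hxy⟩ : IsCoprime (f i ^ s i) (∏ j ∈ Finset.univ.erase i, f j ^ s j) :=
      IsCoprime.prod_right fun j hj => hcop (Ne.symm (Finset.mem_erase.mp hj).1)
    have hv1' : aeval T (f i ^ s i) v = 0 := hv1
    have h0 := congrArg (fun p => aeval T p v) hxy
    simp only [map_add, map_mul, LinearMap.add_apply, Module.End.mul_apply, map_one,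
      Module.End.one_apply] at h0
    rw [hv1', hv2', map_zero, map_zero, add_zero] at h0
    simpa [Submodule.mem_bot] using h0.symm
  have hinternal : DirectSum.IsInternal (fun i => LinearMap.ker (aeval T (f i ^ s i))) :=
    DirectSum.isInternal_submodule_of_iSupIndep_of_iSup_eq_top hind hsupr
  -- invariance
  have hinv : ∀ i, ∀ v ∈ LinearMap.ker (aeval T (f i ^ s i)),
      T v ∈ LinearMap.ker (aeval T (f i ^ s i)) := by
    intro i v hv
    simp only [LinearMap.mem_ker] at hv ⊢
    have hcomm : aeval T (f i ^ s i) * T = T * aeval T (f i ^ s i) := by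
      calc aeval T (f i ^ s i) * T = aeval T ((f i ^ s i) * X) := by rw [map_mul, aeval_X]
        _ = aeval T (X * (f i ^ s i)) := by rw [mul_comm]
        _ = T * aeval T (f i ^ s i) := by rw [map_mul, aeval_X]
    have : aeval T (f i ^ s i) (T v) = T (aeval T (f i ^ s i) v) := by
      rw [← Module.End.mul_apply, hcomm, Module.End.mul_apply]
    rw [this, hv, map_zero]
  -- orthogonality
  have horth : ∀ i j, i ≠ j → ∀ u ∈ LinearMap.ker (aeval T (f i ^ s i)),
      ∀ v ∈ LinearMap.ker (aeval T (f j ^ s j)), B u v = 0 := by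
    intro i j hij u hu v hv
    simp only [LinearMap.mem_ker] at hu hv
    obtain ⟨x, y, hxy⟩ := hcop hij
    have hu' : u = aeval T (f j ^ s j) (aeval T y u) := by
      have h0 := congrArg (fun p => aeval T p u) hxy
      simp only [map_add, map_mul, LinearMap.add_apply, Module.End.mul_apply, map_one,
        Module.End.one_apply] at h0
      rw [hu, map_zero, zero_add] at h0
      have hcomm : aeval T y (aeval T (f j ^ s j) u) = aeval T (f j ^ s j) (aeval T y u) := by
        rw [← Module.End.mul_apply, ← Module.End.mul_apply, ← map_mul, ← map_mul,
          mul_comm y (f j ^ s j)]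
      exact h0.symm.trans hcomm
    rw [hu', hadj, hkey (f j ^ s j) (hgne j) (hself j) v hv]
    exact hB0' _
  -- nondegeneracy on each block
  have hnd : ∀ i, ∀ v ∈ LinearMap.ker (aeval T (f i ^ s i)),
      (∀ u ∈ LinearMap.ker (aeval T (f i ^ s i)), B u v = 0) → v = 0 := by
    intro i v hv hperp
    apply hnondeg
    intro u
    have hu : u ∈ ⨆ j, LinearMap.ker (aeval T (f j ^ s j)) := by
      rw [hsupr]; trivial
    refine Submodule.iSup_induction (motive := fun u => B u v = 0) _ hu
      (fun j x hx => ?_) (hB0 v) (fun x y hx hy => by show B (x + y) v = 0; rw [hadd, hx, hy, add_zero])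
    rcases eq_or_ne j i with rfl | hji
    · exact hperp x hx
    · exact horth j i hji x hx v hv
  exact ⟨hinternal, hinv, horth, hnd⟩
end

section
/- (Jacobson) Let F/F₀ be a quadratic extension of fields of characteristic ≠ 2 with Galois involution σ. Two nondegenerate hermitian forms B₁, B₂ on F^n are equivalent if and only if the associated quadratic forms q_i(x) = B_i(x,x) (taking values in F₀, viewed as quadratic forms on the 2n-dimensional F₀-vector space F^n) are equivalent over F₀. -/
namespace Jac

variable {F₀ F : Type*} [Field F₀] [Field F] [Algebra F₀ F]

/-- Bundled nondegenerate hermitian form on `Fin n → F`. -/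
structure HD (σ : F ≃+* F) (n : ℕ) where
  B : (Fin n → F) → (Fin n → F) → F
  add : ∀ u u' v, B (u + u') v = B u v + B u' v
  smul : ∀ (a : F) (u v), B (a • u) v = a * B u v
  herm : ∀ u v, B u v = σ (B v u)
  nondeg : ∀ v, (∀ u, B u v = 0) → v = 0

namespace HD

variable {σ : F ≃+* F} {n : ℕ} (H : HD σ n)

lemma conj (u v : Fin n → F) : σ (H.B u v) = H.B v u := (H.herm v u).symm

lemma addr (u v v' : Fin n → F) : H.B u (v + v') = H.B u v + H.B u v' := by
  rw [H.herm u (v + v'), H.add, map_add, H.conj, H.conj]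

lemma smulr (a : F) (u v : Fin n → F) : H.B u (a • v) = σ a * H.B u v := by
  rw [H.herm u (a • v), H.smul, map_mul, H.conj]

lemma zerol (v : Fin n → F) : H.B 0 v = 0 := by
  have := H.smul 0 0 v; simpa using this

lemma zeror (v : Fin n → F) : H.B v 0 = 0 := by
  rw [H.herm]; simp [H.zerol]

lemma negl (u v : Fin n → F) : H.B (-u) v = - H.B u v := by
  have := H.smul (-1) u v; simpa using this

lemma negr (u v : Fin n → F) : H.B u (-v) = - H.B u v := by
  rw [H.herm]; simp [H.negl, ← H.herm]

lemma subl (u u' v : Fin n → F) : H.B (u - u') v = H.B u v - H.B u' v := by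
  rw [sub_eq_add_neg, H.add, H.negl, sub_eq_add_neg]

lemma subr (u v v' : Fin n → F) : H.B u (v - v') = H.B u v - H.B u v' := by
  rw [sub_eq_add_neg, H.addr, H.negr, sub_eq_add_neg]

/-- polar form of the trace quadratic form -/
def P (u v : Fin n → F) : F := H.B u v + H.B v u

lemma P_fix (u v : Fin n → F) : σ (H.P u v) = H.P u v := by
  simp only [P, map_add, H.conj]; ring

lemma Q_fix (u : Fin n → F) : σ (H.B u u) = H.B u u := H.conj u u

lemma P_comm (u v : Fin n → F) : H.P u v = H.P v u := by simp [P]; ring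

lemma P_addl (u u' v : Fin n → F) : H.P (u + u') v = H.P u v + H.P u' v := by
  simp [P, H.add, H.addr]; ring

lemma P_smul_fixed (a : F) (ha : σ a = a) (u v : Fin n → F) :
    H.P (a • u) v = a * H.P u v := by
  simp [P, H.smul, H.smulr, ha, mul_add]

lemma Q_smul (a : F) (u : Fin n → F) : H.B (a • u) (a • u) = a * σ a * H.B u u := by
  rw [H.smul, H.smulr]; ring

lemma Q_add (u v : Fin n → F) :
    H.B (u + v) (u + v) = H.B u u + H.B v v + H.P u v := by
  rw [H.add, H.addr, H.addr, P]; ring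

lemma Q_sub (u v : Fin n → F) :
    H.B (u - v) (u - v) = H.B u u + H.B v v - H.P u v := by
  rw [H.subl, H.subr, H.subr, P]; ring

end HD

section Reflection

variable {σ : F ≃+* F} {n : ℕ}

lemma HD.P_negl (H : HD σ n) (u v : Fin n → F) : H.P (-u) v = - H.P u v := by
  simp [HD.P, H.negl, H.negr]; ring

/-- Reflection in a vector `z` with `Q z ≠ 0`, as an `F₀`-linear isometry of the
trace quadratic form. -/
theorem refl_exists (hσalg : ∀ a : F₀, σ (algebraMap F₀ F a) = algebraMap F₀ F a)
    (H : HD σ n) {z : Fin n → F} (hz : H.B z z ≠ 0) :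
    ∃ τ : (Fin n → F) ≃ₗ[F₀] (Fin n → F),
      (∀ m, H.B (τ m) (τ m) = H.B m m) ∧
      (∀ m, τ m = m - (H.P m z / H.B z z) • z) := by
  have hfix : ∀ m, σ (H.P m z / H.B z z) = H.P m z / H.B z z := by
    intro m; rw [map_div₀, H.P_fix, H.Q_fix]
  let t : (Fin n → F) → F := fun m => H.P m z / H.B z z
  have ht : ∀ m, t m = H.P m z / H.B z z := fun _ => rfl
  have htadd : ∀ m m', t (m + m') = t m + t m' := by
    intro m m'; simp only [ht, H.P_addl, add_div]
  have htsmul : ∀ (a : F₀) m, t (a • m) = algebraMap F₀ F a * t m := by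
    intro a m
    simp only [ht]
    rw [← algebraMap_smul F a m, H.P_smul_fixed _ (hσalg a), mul_div_assoc]
  have hQτ : ∀ m, H.B (m - t m • z) (m - t m • z) = H.B m m := by
    intro m
    have hσt : σ (t m) = t m := hfix m
    rw [H.Q_sub, H.Q_smul]
    have hPz : H.P m (t m • z) = t m * H.P m z := by
      simp only [HD.P, H.smulr, hσt]
      rw [H.smul]; ring
    rw [hPz, hσt]
    have : t m * H.P m z = t m * t m * H.B z z := by
      by_cases hP : H.P m z = 0
      · simp [ht, hP]
      · rw [ht, mul_assoc, div_mul_cancel₀ _ hz]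
    rw [this]; ring
  have hPtz : ∀ m, H.P (t m • z) z = 2 * (t m * H.B z z) := by
    intro m
    simp only [HD.P, H.smul, H.smulr, hfix m]
    rw [show σ (t m) = t m from hfix m]
    rw [ht, div_mul_cancel₀ _ hz]; ring
  have hinv : ∀ m, (m - t m • z) - t (m - t m • z) • z = m := by
    intro m
    have hstep : H.P (m - t m • z) z = H.P m z - 2 * (t m * H.B z z) := by
      rw [sub_eq_add_neg, H.P_addl, H.P_negl, hPtz]; ring
    have h2 : t (m - t m • z) = - t m := by
      simp only [ht] at hstep ⊢
      rw [hstep, div_mul_cancel₀ _ hz]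
      ring
    rw [h2]; module
  refine ⟨{ toFun := fun m => m - t m • z,
            invFun := fun m => m - t m • z,
            map_add' := by
              intro m m'
              show (m + m') - t (m + m') • z = (m - t m • z) + (m' - t m' • z)
              rw [htadd]; module
            map_smul' := by
              intro a m
              show (a • m) - t (a • m) • z = (RingHom.id F₀) a • (m - t m • z)
              simp only [RingHom.id_apply]
              rw [htsmul, ← algebraMap_smul F a m,
                ← algebraMap_smul F a (m - t m • z)]
              module
            left_inv := hinv, right_inv := hinv }, ?_, ?_⟩
  · intro m; exact hQτ m
  · intro m; rfl

/-- Witt's lemma: an isometry moving `u` to `w` and fixing `y`, when `u, w` are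
orthogonal to `y` and have the same nonzero length. -/
theorem witt (hσalg : ∀ a : F₀, σ (algebraMap F₀ F a) = algebraMap F₀ F a)
    (H : HD σ n) (h2F : (2 : F) ≠ 0) {u w y : Fin n → F}
    (huw : H.B u u = H.B w w) (hu : H.B u u ≠ 0)
    (huy : H.P u y = 0) (hwy : H.P w y = 0) :
    ∃ g : (Fin n → F) ≃ₗ[F₀] (Fin n → F),
      (∀ m, H.B (g m) (g m) = H.B m m) ∧ g u = w ∧ g y = y := by
  by_cases hz : H.B (u - w) (u - w) = 0
  · -- use z = u + w, then reflect in w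
    have hPuw : H.P u w = H.B u u + H.B w w := by
      have h := H.Q_sub u w
      rw [hz] at h
      linear_combination h
    have hQ4 : H.B (u + w) (u + w) = 2 * 2 * H.B u u := by
      rw [H.Q_add, hPuw, ← huw]; ring
    have hQne : H.B (u + w) (u + w) ≠ 0 := by
      rw [hQ4]; exact mul_ne_zero (mul_ne_zero h2F h2F) hu
    obtain ⟨τ₁, hiso₁, hτ₁⟩ := refl_exists hσalg H hQne
    obtain ⟨τ₂, hiso₂, hτ₂⟩ := refl_exists hσalg H (huw ▸ hu : H.B w w ≠ 0)
    have hτ₁u : τ₁ u = -w := by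
      have hP : H.P u (u + w) = H.B (u + w) (u + w) := by
        rw [H.Q_add]
        simp only [HD.P, H.addr, H.add]
        rw [← huw]; ring
      rw [hτ₁ u, hP, div_self hQne, one_smul]
      module
    have hτ₂w : τ₂ (-w) = w := by
      have hPww : H.P (-w) w = -(2 * H.B w w) := by
        rw [H.P_negl, HD.P]; ring
      rw [hτ₂ (-w), hPww, neg_div, mul_div_assoc, div_self (huw ▸ hu), mul_one]
      module
    have hτ₁y : τ₁ y = y := by
      have hP : H.P y (u + w) = 0 := by
        have : H.P y (u + w) = H.P u y + H.P w y := by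
          simp only [HD.P, H.addr, H.add]; ring
        rw [this, huy, hwy, add_zero]
      rw [hτ₁ y, hP, zero_div, zero_smul, sub_zero]
    have hτ₂y : τ₂ y = y := by
      have hP : H.P y w = 0 := by rw [H.P_comm]; exact hwy
      rw [hτ₂ y, hP, zero_div, zero_smul, sub_zero]
    refine ⟨τ₁.trans τ₂, fun m => ?_, ?_, ?_⟩
    · simp only [LinearEquiv.trans_apply, hiso₂, hiso₁]
    · simp only [LinearEquiv.trans_apply, hτ₁u, hτ₂w]
    · simp only [LinearEquiv.trans_apply, hτ₁y, hτ₂y]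
  · obtain ⟨τ, hiso, hτ⟩ := refl_exists hσalg H hz
    have hτu : τ u = w := by
      have hP : H.P u (u - w) = H.B (u - w) (u - w) := by
        rw [H.Q_sub]
        simp only [HD.P, H.subr, H.subl]
        rw [huw]; ring
      rw [hτ u, hP, div_self hz, one_smul]
      module
    have hτy : τ y = y := by
      have hP : H.P y (u - w) = 0 := by
        have : H.P y (u - w) = H.P u y - H.P w y := by
          simp only [HD.P, H.subr, H.subl]; ring
        rw [this, huy, hwy, sub_zero]
      rw [hτ y, hP, zero_div, zero_smul, sub_zero]
    exact ⟨τ, hiso, hτu, hτy⟩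

end Reflection


section Split

variable {σ : F ≃+* F} {n : ℕ}

theorem exists_aniso (hσa : ∃ a : F, σ a ≠ a) (H : HD σ (n + 1)) :
    ∃ x, H.B x x ≠ 0 := by
  by_contra hcon
  push_neg at hcon
  have hP : ∀ u v, H.B u v + H.B v u = 0 := by
    intro u v
    have h := H.Q_add u v
    rw [hcon, hcon, hcon] at h
    simpa [HD.P] using h.symm
  obtain ⟨a, ha⟩ := hσa
  have hB0 : ∀ u v, H.B u v = 0 := by
    intro u v
    have h1 := hP (a • u) v
    rw [H.smul, H.smulr] at h1
    have h2 : H.B v u = - H.B u v := by linear_combination hP u v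
    have h3 : (a - σ a) * H.B u v = 0 := by linear_combination h1 - σ a * h2
    rcases mul_eq_zero.mp h3 with h | h
    · exact absurd (sub_eq_zero.mp h).symm ha
    · exact h
  have hz := H.nondeg (fun _ => 1) (fun u => hB0 u _)
  exact one_ne_zero (congrFun hz 0)

/-- Data of an orthogonal splitting of a hermitian space along an anisotropic
vector `x`. -/
structure SplitData (σ : F ≃+* F) (n : ℕ) (H : HD σ (n + 1))
    (x : Fin (n + 1) → F) where
  H' : HD σ n
  r : (Fin n → F) →ₗ[F] (Fin (n + 1) → F)
  coord : (Fin (n + 1) → F) →ₗ[F] (Fin n → F)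
  E : (F × (Fin n → F)) ≃ₗ[F] (Fin (n + 1) → F)
  hB' : ∀ u v, H'.B u v = H.B (r u) (r v)
  hrx : ∀ u, H.B (r u) x = 0
  hrinj : Function.Injective r
  hrc : ∀ m, H.B m x = 0 → r (coord m) = m
  hE : ∀ a u, E (a, u) = a • x + r u

theorem split_nonempty (H : HD σ (n + 1)) (x : Fin (n + 1) → F)
    (hx : H.B x x ≠ 0) : Nonempty (SplitData σ n H x) := by
  classical
  set c := H.B x x with hc
  let f : (Fin (n + 1) → F) →ₗ[F] F :=
    { toFun := fun u => H.B u x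
      map_add' := fun u u' => H.add u u' x
      map_smul' := fun a u => by simpa using H.smul a u x }
  have hf : ∀ m, f m = H.B m x := fun _ => rfl
  have hsurj : Function.Surjective f := by
    intro z
    refine ⟨(z / c) • x, ?_⟩
    rw [hf, H.smul, div_mul_cancel₀ _ hx]
  have hK : Module.finrank F (LinearMap.ker f) = n := by
    have h := LinearMap.finrank_range_add_finrank_ker f
    rw [LinearMap.range_eq_top.mpr hsurj, finrank_top, Module.finrank_self,
      Module.finrank_fin_fun] at h
    omega
  let b : Module.Basis (Fin n) F (LinearMap.ker f) := Module.finBasisOfFinrankEq F _ hK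
  let r : (Fin n → F) →ₗ[F] (Fin (n + 1) → F) :=
    (LinearMap.ker f).subtype ∘ₗ (b.equivFun.symm : (Fin n → F) ≃ₗ[F] _)
  have hrk : ∀ k : LinearMap.ker f, r (b.equivFun k) = ↑k := by
    intro k
    show ((LinearMap.ker f).subtype) (b.equivFun.symm (b.equivFun k)) = ↑k
    rw [b.equivFun.symm_apply_apply]
    rfl
  have hrx : ∀ u, H.B (r u) x = 0 := by
    intro u
    have : r u = ↑(b.equivFun.symm u) := rfl
    rw [← hf, this]
    exact (b.equivFun.symm u).2
  have hrinj : Function.Injective r :=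
    fun u v h => b.equivFun.symm.injective (Subtype.val_injective h)
  let πL : (Fin (n + 1) → F) →ₗ[F] (Fin (n + 1) → F) :=
    LinearMap.id - (LinearMap.toSpanSingleton F _ x) ∘ₗ (c⁻¹ • f)
  have hπ : ∀ m, πL m = m - (c⁻¹ * f m) • x := fun m => rfl
  have hfx : f x = c := hf x
  have hmem : ∀ m, πL m ∈ LinearMap.ker f := by
    intro m
    rw [LinearMap.mem_ker, hπ, map_sub, map_smul, smul_eq_mul, hfx]
    field_simp; ring
  let coordL : (Fin (n + 1) → F) →ₗ[F] (Fin n → F) :=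
    b.equivFun.toLinearMap ∘ₗ LinearMap.codRestrict _ πL hmem
  have hcoord : ∀ m, r (coordL m) = πL m := by
    intro m
    have : coordL m = b.equivFun ⟨πL m, hmem m⟩ := rfl
    rw [this, hrk]
  have hrc : ∀ m, H.B m x = 0 → r (coordL m) = m := by
    intro m hm
    rw [hcoord, hπ, hf, hm]
    simp
  have hπr : ∀ u, πL (r u) = r u := by
    intro u
    rw [hπ, hf, hrx u]
    simp
  have hcr : ∀ u, coordL (r u) = u := by
    intro u
    have h1 : coordL (r u) = b.equivFun ⟨πL (r u), hmem _⟩ := rfl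
    have h2 : (⟨πL (r u), hmem _⟩ : LinearMap.ker f) = b.equivFun.symm u := by
      apply Subtype.ext
      show πL (r u) = ((b.equivFun.symm u : LinearMap.ker f) : Fin (n + 1) → F)
      rw [hπr u]
      rfl
    rw [h1, h2]
    exact b.equivFun.apply_symm_apply u
  have hdecomp : ∀ m, m = (c⁻¹ * f m) • x + r (coordL m) := by
    intro m
    rw [hcoord, hπ]
    module
  -- the hermitian structure on the complement
  have hxr : ∀ u, H.B x (r u) = 0 := by
    intro u
    rw [H.herm, hrx, map_zero]
  let H' : HD σ n :=
    { B := fun u v => H.B (r u) (r v)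
      add := fun u u' v => by show H.B (r (u + u')) (r v) = _; rw [map_add, H.add]
      smul := fun a u v => by show H.B (r (a • u)) (r v) = _; rw [map_smul, H.smul]
      herm := fun u v => H.herm _ _
      nondeg := by
        intro v hv
        have hv' : ∀ u, H.B (r u) (r v) = 0 := hv
        have hall : ∀ m, H.B m (r v) = 0 := by
          intro m
          conv_lhs => rw [hdecomp m]
          rw [H.add, H.smul, hxr, hv' (coordL m)]
          ring
        have : r v = 0 := H.nondeg _ hall
        exact hrinj (by rw [this, map_zero])
      }
  -- the splitting equivalence
  let fwd : (F × (Fin n → F)) →ₗ[F] (Fin (n + 1) → F) :=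
    (LinearMap.toSpanSingleton F _ x) ∘ₗ (LinearMap.fst F F (Fin n → F)) +
      r ∘ₗ (LinearMap.snd F F (Fin n → F))
  have hfwd : ∀ a u, fwd (a, u) = a • x + r u := fun a u => rfl
  let bwd : (Fin (n + 1) → F) →ₗ[F] (F × (Fin n → F)) :=
    LinearMap.prod (c⁻¹ • f) coordL
  have hbwd : ∀ m, bwd m = (c⁻¹ * f m, coordL m) := fun m => rfl
  have hfb : fwd ∘ₗ bwd = LinearMap.id := by
    apply LinearMap.ext
    intro m
    rw [LinearMap.comp_apply, hbwd, hfwd, LinearMap.id_apply]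
    exact (hdecomp m).symm
  have hbf : bwd ∘ₗ fwd = LinearMap.id := by
    apply LinearMap.ext
    intro p
    obtain ⟨a, u⟩ := p
    have hfau : f (a • x + r u) = a * c := by
      rw [hf, H.add, H.smul, hrx u, ← hf, hfx]
      ring
    rw [LinearMap.comp_apply, hfwd, hbwd, LinearMap.id_apply]
    have h1 : c⁻¹ * f (a • x + r u) = a := by
      rw [hfau]; field_simp
    have h2 : coordL (a • x + r u) = u := by
      have hπau : πL (a • x + r u) = r u := by
        rw [hπ, hfau]
        have : c⁻¹ * (a * c) = a := by field_simp
        rw [this]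
        module
      have he1 : coordL (a • x + r u) = b.equivFun ⟨πL (a • x + r u), hmem _⟩ := rfl
      have he2 : (⟨πL (a • x + r u), hmem _⟩ : LinearMap.ker f) =
          b.equivFun.symm u := by
        apply Subtype.ext
        show πL (a • x + r u) = ((b.equivFun.symm u : LinearMap.ker f) : Fin (n + 1) → F)
        rw [hπau]
        rfl
      rw [he1, he2]
      exact b.equivFun.apply_symm_apply u
    rw [h1, h2]
  let E : (F × (Fin n → F)) ≃ₗ[F] (Fin (n + 1) → F) :=
    LinearEquiv.ofLinear fwd bwd hfb hbf
  exact ⟨{ H' := H', r := r, coord := coordL, E := E,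
           hB' := fun u v => rfl, hrx := hrx, hrinj := hrinj,
           hrc := hrc, hE := fun a u => hfwd a u }⟩

end Split

section Main

variable {σ : F ≃+* F} {n : ℕ}

/-- A pointwise isometry of trace quadratic forms transfers polar forms. -/
theorem polar_transfer (H₁ H₂ : HD σ n) (χ : (Fin n → F) ≃ₗ[F₀] (Fin n → F))
    (hiso : ∀ m, H₂.B m m = H₁.B (χ m) (χ m)) :
    ∀ m m', H₂.P m m' = H₁.P (χ m) (χ m') := by
  intro m m'
  have h2 := H₂.Q_add m m'
  have h1 := H₁.Q_add (χ m) (χ m')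
  rw [← map_add χ, ← hiso, ← hiso, ← hiso] at h1
  linear_combination h1 - h2

theorem ortho_transfer (h2F : (2 : F) ≠ 0) {δ : F} (hδ0 : δ ≠ 0) (hδσ : σ δ = -δ)
    (H₁ H₂ : HD σ n) (χ : (Fin n → F) ≃ₗ[F₀] (Fin n → F))
    (hiso : ∀ m, H₂.B m m = H₁.B (χ m) (χ m)) {x y : Fin n → F}
    (hχx : χ x = y) (hχδx : χ (δ • x) = δ • y) :
    ∀ m, H₂.B m x = 0 → H₁.B (χ m) y = 0 := by
  intro m hm
  have hxm : H₂.B x m = 0 := by rw [H₂.herm, hm, map_zero]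
  have h1 : H₁.P (χ m) y = 0 := by
    rw [← hχx, ← polar_transfer H₁ H₂ χ hiso, HD.P, hm, hxm, add_zero]
  have h2 : H₁.P (χ m) (δ • y) = 0 := by
    rw [← hχδx, ← polar_transfer H₁ H₂ χ hiso, HD.P, H₂.smulr, H₂.smul, hm, hxm]
    ring
  rw [HD.P] at h1
  rw [HD.P, H₁.smulr, H₁.smul, hδσ] at h2
  have h3 : (2 : F) * δ * H₁.B (χ m) y = 0 := by linear_combination -h2 + δ * h1
  rcases mul_eq_zero.mp h3 with h | h
  · rcases mul_eq_zero.mp h with h' | h'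
    · exact absurd h' h2F
    · exact absurd h' hδ0
  · exact h

theorem key (hσalg : ∀ a : F₀, σ (algebraMap F₀ F a) = algebraMap F₀ F a)
    (h2F : (2 : F) ≠ 0) {δ : F} (hδ0 : δ ≠ 0) (hδσ : σ δ = -δ) :
    ∀ (n : ℕ) (H₁ H₂ : HD σ n) (φ : (Fin n → F) ≃ₗ[F₀] (Fin n → F)),
      (∀ m, H₂.B m m = H₁.B (φ m) (φ m)) →
      ∃ g : (Fin n → F) ≃ₗ[F] (Fin n → F), ∀ u v, H₂.B u v = H₁.B (g u) (g v) := by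
  intro n
  induction n with
  | zero =>
    intro H₁ H₂ φ hφ
    refine ⟨LinearEquiv.refl F _, fun u v => ?_⟩
    have hu : u = 0 := funext fun i => i.elim0
    have hv : v = 0 := funext fun i => i.elim0
    rw [hu, hv, H₂.zeror, LinearEquiv.refl_apply, H₁.zeror]
  | succ n ih =>
    intro H₁ H₂ φ hφ
    have hσa : ∃ a : F, σ a ≠ a := by
      refine ⟨δ, ?_⟩
      rw [hδσ]
      intro hh
      rcases mul_eq_zero.mp (show (2 : F) * δ = 0 by linear_combination -hh)
        with h | h
      · exact h2F h
      · exact hδ0 h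
    obtain ⟨x, hx⟩ := exists_aniso hσa H₂
    set c := H₂.B x x with hc
    set y := φ x with hy
    have hyc : H₁.B y y = c := (hφ x).symm
    have hyne : H₁.B y y ≠ 0 := by rw [hyc]; exact hx
    -- Witt step: build an isometry χ with χ x = y and χ (δ • x) = δ • y
    have hQδx : H₂.B (δ • x) (δ • x) = δ * -δ * c := by rw [H₂.Q_smul, hδσ]
    have huw : H₁.B (φ (δ • x)) (φ (δ • x)) = H₁.B (δ • y) (δ • y) := by
      rw [← hφ (δ • x), hQδx, H₁.Q_smul, hδσ, hyc]
    have hune : H₁.B (φ (δ • x)) (φ (δ • x)) ≠ 0 := by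
      rw [← hφ (δ • x), hQδx]
      intro h
      rcases mul_eq_zero.mp h with h | h
      · rcases mul_eq_zero.mp h with h' | h'
        · exact hδ0 h'
        · exact hδ0 (neg_eq_zero.mp h')
      · exact hx h
    have hu₀y : H₁.P (φ (δ • x)) y = 0 := by
      rw [hy, ← polar_transfer H₁ H₂ φ hφ, HD.P, H₂.smul, H₂.smulr, hδσ]
      ring
    have hw₀y : H₁.P (δ • y) y = 0 := by
      rw [HD.P, H₁.smul, H₁.smulr, hδσ]
      ring
    obtain ⟨g₀, hg₀iso, hg₀u, hg₀y⟩ := witt hσalg H₁ h2F huw hune hu₀y hw₀y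
    set χ : (Fin (n + 1) → F) ≃ₗ[F₀] (Fin (n + 1) → F) := φ.trans g₀ with hχ
    have hχiso : ∀ m, H₂.B m m = H₁.B (χ m) (χ m) := by
      intro m
      rw [hχ, LinearEquiv.trans_apply, hg₀iso, ← hφ]
    have hχx : χ x = y := by
      rw [hχ, LinearEquiv.trans_apply, ← hy, hg₀y]
    have hχδx : χ (δ • x) = δ • y := by
      rw [hχ, LinearEquiv.trans_apply, hg₀u]
    -- inverse isometry facts
    have hχ'iso : ∀ m, H₁.B m m = H₂.B (χ.symm m) (χ.symm m) := by
      intro m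
      conv_lhs => rw [← χ.apply_symm_apply m]
      rw [← hχiso]
    have hχ'y : χ.symm y = x := by rw [← hχx, χ.symm_apply_apply]
    have hχ'δy : χ.symm (δ • y) = δ • x := by rw [← hχδx, χ.symm_apply_apply]
    -- split both spaces
    obtain ⟨S₂⟩ := split_nonempty H₂ x hx
    obtain ⟨S₁⟩ := split_nonempty H₁ y hyne
    -- the induced isometry on complements
    have hψmemfwd : ∀ u, H₁.B (χ (S₂.r u)) y = 0 := fun u =>
      ortho_transfer h2F hδ0 hδσ H₁ H₂ χ hχiso hχx hχδx _ (S₂.hrx u)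
    have hψmembwd : ∀ u, H₂.B (χ.symm (S₁.r u)) x = 0 := fun u =>
      ortho_transfer h2F hδ0 hδσ H₂ H₁ χ.symm hχ'iso hχ'y hχ'δy _ (S₁.hrx u)
    let ψf : (Fin n → F) →ₗ[F₀] (Fin n → F) :=
      (S₁.coord.restrictScalars F₀) ∘ₗ (χ : (Fin (n+1) → F) →ₗ[F₀] (Fin (n+1) → F))
        ∘ₗ (S₂.r.restrictScalars F₀)
    let ψb : (Fin n → F) →ₗ[F₀] (Fin n → F) :=
      (S₂.coord.restrictScalars F₀) ∘ₗ
        (χ.symm : (Fin (n+1) → F) →ₗ[F₀] (Fin (n+1) → F))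
        ∘ₗ (S₁.r.restrictScalars F₀)
    have hψf : ∀ u, ψf u = S₁.coord (χ (S₂.r u)) := fun u => rfl
    have hψb : ∀ u, ψb u = S₂.coord (χ.symm (S₁.r u)) := fun u => rfl
    have hrψf : ∀ u, S₁.r (ψf u) = χ (S₂.r u) := fun u => by
      rw [hψf]; exact S₁.hrc _ (hψmemfwd u)
    have hrψb : ∀ u, S₂.r (ψb u) = χ.symm (S₁.r u) := fun u => by
      rw [hψb]; exact S₂.hrc _ (hψmembwd u)
    have hψbf : ψb ∘ₗ ψf = LinearMap.id := by
      apply LinearMap.ext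
      intro u
      apply S₂.hrinj
      rw [LinearMap.comp_apply, LinearMap.id_apply, hrψb, hrψf,
        χ.symm_apply_apply]
    have hψfb : ψf ∘ₗ ψb = LinearMap.id := by
      apply LinearMap.ext
      intro u
      apply S₁.hrinj
      rw [LinearMap.comp_apply, LinearMap.id_apply, hrψf, hrψb,
        χ.apply_symm_apply]
    let ψ : (Fin n → F) ≃ₗ[F₀] (Fin n → F) := LinearEquiv.ofLinear ψf ψb hψfb hψbf
    have hψ : ∀ u, S₂.H'.B u u = S₁.H'.B (ψ u) (ψ u) := by
      intro u
      have : ψ u = ψf u := rfl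
      rw [this, S₂.hB', S₁.hB', hrψf, ← hχiso]
    obtain ⟨g', hg'⟩ := ih S₁.H' S₂.H' ψ hψ
    -- reassemble
    have hBxr₂ : ∀ p, H₂.B x (S₂.r p) = 0 := fun p => by
      rw [H₂.herm, S₂.hrx, map_zero]
    have hBxr₁ : ∀ p, H₁.B y (S₁.r p) = 0 := fun p => by
      rw [H₁.herm, S₁.hrx, map_zero]
    have hexp₂ : ∀ a p a' p',
        H₂.B (S₂.E (a, p)) (S₂.E (a', p')) = a * σ a' * c + S₂.H'.B p p' := by
      intro a p a' p'
      rw [S₂.hE, S₂.hE, H₂.add, H₂.addr, H₂.addr, H₂.smul, H₂.smul,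
        H₂.smulr, H₂.smulr, hBxr₂, S₂.hrx, ← S₂.hB', ← hc]
      ring
    have hexp₁ : ∀ a p a' p',
        H₁.B (S₁.E (a, p)) (S₁.E (a', p')) = a * σ a' * c + S₁.H'.B p p' := by
      intro a p a' p'
      rw [S₁.hE, S₁.hE, H₁.add, H₁.addr, H₁.addr, H₁.smul, H₁.smul,
        H₁.smulr, H₁.smulr, hBxr₁, S₁.hrx, ← S₁.hB', hyc]
      ring
    refine ⟨S₂.E.symm.trans (((LinearEquiv.refl F F).prodCongr g').trans S₁.E),
      fun u v => ?_⟩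
    obtain ⟨a, p, hap⟩ : ∃ a p, u = S₂.E (a, p) :=
      ⟨(S₂.E.symm u).1, (S₂.E.symm u).2, by rw [← Prod.mk.eta (p := S₂.E.symm u),
        S₂.E.apply_symm_apply]⟩
    obtain ⟨a', p', hap'⟩ : ∃ a' p', v = S₂.E (a', p') :=
      ⟨(S₂.E.symm v).1, (S₂.E.symm v).2, by rw [← Prod.mk.eta (p := S₂.E.symm v),
        S₂.E.apply_symm_apply]⟩
    have happ : ∀ b q, (S₂.E.symm.trans (((LinearEquiv.refl F F).prodCongr g').trans
        S₁.E)) (S₂.E (b, q)) = S₁.E (b, g' q) := by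
      intro b q
      rw [LinearEquiv.trans_apply, LinearEquiv.trans_apply,
        LinearEquiv.symm_apply_apply, LinearEquiv.prodCongr_apply]
      rfl
    rw [hap, hap', happ, happ, hexp₂, hexp₁, hg']

end Main

end Jac

/-- (Jacobson) Let `F/F₀` be a quadratic extension, `char ≠ 2`, with Galois involution
`σ`. Two nondegenerate hermitian forms on `F^n` are equivalent iff the associated
quadratic forms `q_i(x) = B_i(x,x)` (on `F^n` viewed as an `F₀`-vector space) are
equivalent over `F₀`. -/
theorem jacobson_hermitian_iff_quadratic {F₀ F : Type*} [Field F₀] [Field F]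
    [Algebra F₀ F] (h2 : (2 : F₀) ≠ 0)
    (hrank : Module.finrank F₀ F = 2)
    (σ : F ≃+* F) (hσinv : ∀ x, σ (σ x) = x) (hσne : σ ≠ RingEquiv.refl F)
    (hσfix : ∀ x : F, σ x = x ↔ x ∈ (algebraMap F₀ F).range)
    {n : ℕ} (B₁ B₂ : (Fin n → F) → (Fin n → F) → F)
    (hadd₁ : ∀ u u' v, B₁ (u + u') v = B₁ u v + B₁ u' v)
    (hsmul₁ : ∀ (a : F) u v, B₁ (a • u) v = a * B₁ u v)
    (hherm₁ : ∀ u v, B₁ u v = σ (B₁ v u))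
    (hnondeg₁ : ∀ v, (∀ u, B₁ u v = 0) → v = 0)
    (hadd₂ : ∀ u u' v, B₂ (u + u') v = B₂ u v + B₂ u' v)
    (hsmul₂ : ∀ (a : F) u v, B₂ (a • u) v = a * B₂ u v)
    (hherm₂ : ∀ u v, B₂ u v = σ (B₂ v u))
    (hnondeg₂ : ∀ v, (∀ u, B₂ u v = 0) → v = 0) :
    (∃ g : (Fin n → F) ≃ₗ[F] (Fin n → F), ∀ u v, B₂ u v = B₁ (g u) (g v)) ↔
      (∃ φ : (Fin n → F) ≃ₗ[F₀] (Fin n → F), ∀ x, B₂ x x = B₁ (φ x) (φ x)) := by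
  constructor
  · rintro ⟨g, hg⟩
    exact ⟨g.restrictScalars F₀, fun x => hg x x⟩
  · rintro ⟨φ, hφ⟩
    have hσalg : ∀ a : F₀, σ (algebraMap F₀ F a) = algebraMap F₀ F a :=
      fun a => (hσfix _).mpr ⟨a, rfl⟩
    have h2F : (2 : F) ≠ 0 := by
      intro h
      apply h2
      apply (algebraMap F₀ F).injective
      rw [map_ofNat, map_zero]
      exact h
    obtain ⟨a, ha⟩ : ∃ a : F, σ a ≠ a := by
      by_contra hcon
      push_neg at hcon
      exact hσne (RingEquiv.ext hcon)
    have hδ0 : a - σ a ≠ 0 := sub_ne_zero.mpr (Ne.symm ha)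
    have hδσ : σ (a - σ a) = -(a - σ a) := by
      rw [map_sub, hσinv]
      ring
    let H₁ : Jac.HD σ n := ⟨B₁, hadd₁, hsmul₁, hherm₁, hnondeg₁⟩
    let H₂ : Jac.HD σ n := ⟨B₂, hadd₂, hsmul₂, hherm₂, hnondeg₂⟩
    exact Jac.key hσalg h2F hδ0 hδσ n H₁ H₂ φ hφ
end

section
/- Let p(i) denote the number of partitions of i, and for n ≥ 0 let z(n) = Σ_{(k_1,...,k_n): Σ i k_i = n} ∏_{i=1}^{n} C(p(i)+k_i−1, k_i) (the number of z-classes in GL_n(K) for K algebraically closed). Then Σ_{n≥0} z(n) x^n = ∏_{i=1}^{∞} (1−x^i)^{−p(i)}. -/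
open PowerSeries

/-- `p n` is the number of partitions of `n`. -/
noncomputable def numPartitions (n : ℕ) : ℕ := Fintype.card (Nat.Partition n)

/-- `z n = Σ_{(k₁,…,k_n) : Σ i·k_i = n} ∏_i C(p(i)+k_i−1, k_i)`, the number of
z-classes in `GL_n` over an algebraically closed field. -/
noncomputable def zGL (n : ℕ) : ℕ :=
  ∑ k ∈ Finset.univ.filter
      (fun k : Fin n → Fin (n + 1) => ∑ i, (i.val + 1) * (k i).val = n),
    ∏ i : Fin n, Nat.choose (numPartitions (i.val + 1) + (k i).val - 1) (k i).val

open Finset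

/-- Auxiliary series: the claimed inverse of `(1 - X^i)^p`. -/
noncomputable def auxF (i p : ℕ) : PowerSeries ℚ :=
  PowerSeries.mk fun m => if i ∣ m then ((p + m / i - 1).choose (m / i) : ℚ) else 0

lemma auxF_zero (i : ℕ) : auxF i 0 = 1 := by
  ext m
  simp only [auxF, coeff_mk, coeff_one]
  split_ifs with h1 h2 h2
  · subst h2; simp
  · have hi0 : 0 < i := by
      rcases Nat.eq_zero_or_pos i with rfl | h
      · exact absurd (Nat.zero_dvd.mp h1) h2
      · exact h
    have hk : 0 < m / i := Nat.div_pos (Nat.le_of_dvd (Nat.pos_of_ne_zero h2) h1) hi0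
    rw [Nat.choose_eq_zero_of_lt (by omega)]
    simp
  · exact absurd (h2 ▸ dvd_zero i) h1
  · rfl

lemma auxF_succ_mul (i : ℕ) (hi : 1 ≤ i) (p : ℕ) :
    auxF i (p + 1) * (1 - X ^ i) = auxF i p := by
  ext m
  rw [mul_sub, mul_one, map_sub, PowerSeries.coeff_mul_X_pow']
  simp only [auxF, coeff_mk]
  by_cases hdvd : i ∣ m
  · rw [if_pos hdvd, if_pos hdvd]
    rcases Nat.eq_zero_or_pos m with rfl | hm
    · rw [if_neg (by omega)]
      simp
    · have him : i ≤ m := Nat.le_of_dvd hm hdvd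
      rw [if_pos him, if_pos (Nat.dvd_sub hdvd dvd_rfl)]
      obtain ⟨c, rfl⟩ := hdvd
      have hc : 0 < c := by
        rcases Nat.eq_zero_or_pos c with rfl | h
        · simp at hm
        · exact h
      obtain ⟨c', rfl⟩ : ∃ c', c = c' + 1 := ⟨c - 1, by omega⟩
      have hmul : i * (c' + 1) - i = i * c' := by rw [Nat.mul_succ, Nat.add_sub_cancel]
      rw [hmul, Nat.mul_div_cancel_left _ (by omega : 0 < i),
        Nat.mul_div_cancel_left _ (by omega : 0 < i)]
      rw [show p + 1 + (c' + 1) - 1 = (p + c') + 1 by omega,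
        show p + 1 + c' - 1 = p + c' by omega,
        show p + (c' + 1) - 1 = p + c' by omega,
        Nat.choose_succ_succ]
      push_cast
      ring
  · rw [if_neg hdvd, if_neg hdvd]
    by_cases him : i ≤ m
    · rw [if_pos him, if_neg (fun h => hdvd (by
        have := Nat.dvd_add h (dvd_refl i)
        rwa [Nat.sub_add_cancel him] at this))]
      ring
    · rw [if_neg him]; ring

lemma auxF_mul (i : ℕ) (hi : 1 ≤ i) (p : ℕ) :
    auxF i p * (1 - X ^ i) ^ p = 1 := by
  induction p with
  | zero => simp [auxF_zero]
  | succ p ih =>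
    calc auxF i (p + 1) * (1 - X ^ i) ^ (p + 1)
        = (auxF i (p + 1) * (1 - X ^ i)) * (1 - X ^ i) ^ p := by ring
      _ = auxF i p * (1 - X ^ i) ^ p := by rw [auxF_succ_mul i hi p]
      _ = 1 := ih

lemma coeff_inv_pow (i : ℕ) (hi : 1 ≤ i) (p m : ℕ) :
    (PowerSeries.coeff (R := ℚ) m) (((1 - X ^ i) ^ p)⁻¹) =
      if i ∣ m then ((p + m / i - 1).choose (m / i) : ℚ) else 0 := by
  have h : PowerSeries.constantCoeff (R := ℚ) ((1 - X ^ i) ^ p) ≠ 0 := by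
    simp [zero_pow (by omega : i ≠ 0)]
  rw [(PowerSeries.inv_eq_iff_mul_eq_one h).mpr (auxF_mul i hi p)]
  simp [auxF]

lemma prod_Icc_one_eq {M : Type*} [CommMonoid M] (f : ℕ → M) (n : ℕ) :
    ∏ i ∈ Icc 1 n, f i = ∏ j ∈ range n, f (j + 1) := by
  induction n with
  | zero => simp
  | succ n ih =>
    rw [prod_range_succ, ← ih, ← Finset.Ico_add_one_right_eq_Icc,
      Finset.prod_Ico_succ_top (by omega), Finset.Ico_add_one_right_eq_Icc]

lemma sum_Icc_one_eq {M : Type*} [AddCommMonoid M] (f : ℕ → M) (n : ℕ) :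
    ∑ i ∈ Icc 1 n, f i = ∑ j ∈ range n, f (j + 1) := by
  induction n with
  | zero => simp
  | succ n ih =>
    rw [sum_range_succ, ← ih, ← Finset.Ico_add_one_right_eq_Icc,
      Finset.sum_Ico_succ_top (by omega), Finset.Ico_add_one_right_eq_Icc]

/-- Map a finsupp `l` (exponent budget per factor) to the tuple of multiplicities. -/
noncomputable def toK (n : ℕ) (l : ℕ →₀ ℕ) : Fin n → Fin (n + 1) :=
  fun j => ⟨min (l (j.val + 1) / (j.val + 1)) n, Nat.lt_succ_of_le (min_le_right _ _)⟩

/-- Map a tuple of multiplicities to the finsupp of exponent budgets. -/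
noncomputable def toL (n : ℕ) (k : Fin n → Fin (n + 1)) : ℕ →₀ ℕ :=
  Finsupp.onFinset (Finset.Icc 1 n)
    (fun i => if h : 1 ≤ i ∧ i ≤ n then i * ((k ⟨i - 1, by omega⟩ : Fin (n + 1)) : ℕ) else 0)
    (fun i hi => by
      by_contra hc
      rw [Finset.mem_Icc] at hc
      exact hi (dif_neg hc))

lemma toL_apply_fin (n : ℕ) (k : Fin n → Fin (n + 1)) (j : Fin n) :
    toL n k ((j : ℕ) + 1) = ((j : ℕ) + 1) * ((k j : Fin (n + 1)) : ℕ) := by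
  have hj := j.isLt
  simp only [toL, Finsupp.onFinset_apply]
  rw [dif_pos ⟨by omega, by omega⟩]
  have h : (⟨(j : ℕ) + 1 - 1, by omega⟩ : Fin n) = j := Fin.ext (by simp)
  rw [h]

lemma toL_apply_of_not_mem (n : ℕ) (k : Fin n → Fin (n + 1)) (i : ℕ)
    (h : i ∉ Finset.Icc 1 n) : toL n k i = 0 := by
  rw [Finset.mem_Icc] at h
  simp only [toL, Finsupp.onFinset_apply]
  exact dif_neg (by omega)

/-- Generating function identity: `Σ_{n≥0} z(n) xⁿ = ∏_{i≥1} (1−xⁱ)^{−p(i)}`, stated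
coefficientwise (factors with `i > n` do not affect the `n`-th coefficient). -/
theorem zGL_generating_function :
    ∀ n : ℕ, (PowerSeries.coeff (R := ℚ) n)
        (∏ i ∈ Finset.Icc 1 n, ((1 - (PowerSeries.X : PowerSeries ℚ) ^ i) ^ numPartitions i)⁻¹) =
      zGL n := by
  intro n
  classical
  rw [PowerSeries.coeff_prod]
  rw [Finset.sum_congr rfl (fun l _ => Finset.prod_congr rfl
    (fun i hi => coeff_inv_pow i (Finset.mem_Icc.mp hi).1 (numPartitions i) (l i)))]
  rw [← Finset.sum_filter_of_ne (p := fun l : ℕ →₀ ℕ => ∀ i ∈ Finset.Icc 1 n, i ∣ l i)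
    (fun l _ hprod i hi => by
      by_contra hni
      exact hprod (Finset.prod_eq_zero hi (if_neg hni)))]
  rw [zGL]
  push_cast
  refine Finset.sum_bij' (fun l _ => toK n l) (fun k _ => toL n k) ?_ ?_ ?_ ?_ ?_
  · -- toK lands in the filter set
    intro l hl
    rw [Finset.mem_filter] at hl ⊢
    obtain ⟨hmem, hdvd⟩ := hl
    rw [mem_finsuppAntidiag] at hmem
    obtain ⟨hsum, _⟩ := hmem
    refine ⟨Finset.mem_univ _, ?_⟩
    have hbound : ∀ j : Fin n, l ((j : ℕ) + 1) ≤ n := by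
      intro j
      calc l ((j : ℕ) + 1) ≤ ∑ i ∈ Finset.Icc 1 n, l i :=
            Finset.single_le_sum (fun i _ => Nat.zero_le _)
              (Finset.mem_Icc.mpr ⟨by omega, by omega⟩)
        _ = n := hsum
    have hval : ∀ j : Fin n, ((j : ℕ) + 1) * ((toK n l j : Fin (n + 1)) : ℕ) = l ((j : ℕ) + 1) := by
      intro j
      have h1 : ((j : ℕ) + 1) ∣ l ((j : ℕ) + 1) :=
        hdvd _ (Finset.mem_Icc.mpr ⟨by omega, by omega⟩)
      have h2 : l ((j : ℕ) + 1) / ((j : ℕ) + 1) ≤ n :=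
        le_trans (Nat.div_le_self _ _) (hbound j)
      simp only [toK, min_eq_left h2]
      exact Nat.mul_div_cancel' h1
    rw [Finset.sum_congr rfl (fun j _ => hval j)]
    rw [Fin.sum_univ_eq_sum_range (fun j => l (j + 1)) n, ← sum_Icc_one_eq]
    exact hsum
  · -- toL lands in the antidiag filter set
    intro k hk
    rw [Finset.mem_filter] at hk
    have hsumk := hk.2
    rw [Finset.mem_filter, mem_finsuppAntidiag]
    refine ⟨⟨?_, ?_⟩, ?_⟩
    · rw [show (Finset.Icc 1 n).sum (toL n k) = ∑ i ∈ Finset.Icc 1 n, toL n k i from rfl,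
        sum_Icc_one_eq (fun i => toL n k i) n,
        ← Fin.sum_univ_eq_sum_range (fun j => toL n k (j + 1)) n]
      rw [Finset.sum_congr rfl (fun j _ => toL_apply_fin n k j)]
      exact hsumk
    · exact Finsupp.support_onFinset_subset
    · intro i hi
      rw [Finset.mem_Icc] at hi
      simp only [toL, Finsupp.onFinset_apply]
      rw [dif_pos hi]
      exact dvd_mul_right _ _
  · -- left inverse
    intro l hl
    rw [Finset.mem_filter, mem_finsuppAntidiag] at hl
    obtain ⟨⟨hsum, hsupp⟩, hdvd⟩ := hl
    ext i
    by_cases hi : i ∈ Finset.Icc 1 n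
    · rw [Finset.mem_Icc] at hi
      have h1 : 1 ≤ i := hi.1
      obtain ⟨i', rfl⟩ : ∃ i', i = i' + 1 := ⟨i - 1, by omega⟩
      have hi' : i' < n := by omega
      have := toL_apply_fin n (toK n l) ⟨i', hi'⟩
      simp only [Fin.val_mk] at this
      rw [this]
      have hdvd' : (i' + 1) ∣ l (i' + 1) :=
        hdvd _ (Finset.mem_Icc.mpr ⟨by omega, by omega⟩)
      have hb : l (i' + 1) ≤ n := by
        calc l (i' + 1) ≤ ∑ i ∈ Finset.Icc 1 n, l i :=
              Finset.single_le_sum (fun i _ => Nat.zero_le _)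
                (Finset.mem_Icc.mpr ⟨by omega, by omega⟩)
          _ = n := hsum
      simp only [toK, Fin.val_mk, min_eq_left (le_trans (Nat.div_le_self _ _) hb)]
      exact Nat.mul_div_cancel' hdvd'
    · rw [toL_apply_of_not_mem n _ i hi]
      exact (Finsupp.notMem_support_iff.mp (fun hs => hi (hsupp hs))).symm
  · -- right inverse
    intro k hk
    funext j
    apply Fin.ext
    simp only [toK]
    rw [toL_apply_fin n k j]
    rw [Nat.mul_div_cancel_left _ (by omega : 0 < (j : ℕ) + 1)]
    exact min_eq_left (by omega)
  · -- summand equality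
    intro l hl
    rw [Finset.mem_filter, mem_finsuppAntidiag] at hl
    obtain ⟨⟨hsum, hsupp⟩, hdvd⟩ := hl
    rw [Finset.prod_congr rfl (fun i hi => if_pos (hdvd i hi))]
    rw [prod_Icc_one_eq (fun i => ((numPartitions i + l i / i - 1).choose (l i / i) : ℚ)) n,
      ← Fin.prod_univ_eq_prod_range
        (fun j => ((numPartitions (j + 1) + l (j + 1) / (j + 1) - 1).choose (l (j + 1) / (j + 1)) : ℚ)) n]
    refine Finset.prod_congr rfl (fun j _ => ?_)
    have hb : l ((j : ℕ) + 1) ≤ n := by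
      calc l ((j : ℕ) + 1) ≤ ∑ i ∈ Finset.Icc 1 n, l i :=
            Finset.single_le_sum (fun i _ => Nat.zero_le _)
              (Finset.mem_Icc.mpr ⟨by omega, by omega⟩)
        _ = n := hsum
    simp only [toK, Fin.val_mk, min_eq_left (le_trans (Nat.div_le_self _ _) hb)]
end
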